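/- arXiv:2402.05754 — 2 statements merged into one kernel-verified Lean document; each statement's English description precedes it below -/
import Mathlib

section
/- Let a, b, a', b' ∈ V with a ≠ b, a' ≠ b', and ϑ_0(a) = ϑ_0(b) = ϑ_0(a') = ϑ_0(b'). Then there exists a symplectic F_2-linear bijection A : V → V such that ϑ_a(A u) = ϑ_{a'}(u) and ϑ_b(A u) = ϑ_{b'}(u) for all u ∈ V. (That is, Sp(2m,2) acts 2-transitively on each of its two orbits Ω⁺ and Ω⁻ of quadratic forms linearizing to ⟨·,·⟩.) -/
open Finset

/-- The symplectic bilinear form `⟨u,v⟩ = ∑_{i<m} (u_i v_{m+i} + u_{m+i} v_i)` on `(F_2)^{2m}`. -/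
def symp (m : ℕ) (u v : Fin (2*m) → ZMod 2) : ZMod 2 :=
  ∑ i : Fin m, (u ⟨i.1, by omega⟩ * v ⟨m + i.1, by omega⟩ +
    u ⟨m + i.1, by omega⟩ * v ⟨i.1, by omega⟩)

/-- The quadratic form `ϑ_0(u) = ∑_{i<m} u_i u_{m+i}`. -/
def th0 (m : ℕ) (u : Fin (2*m) → ZMod 2) : ZMod 2 :=
  ∑ i : Fin m, u ⟨i.1, by omega⟩ * u ⟨m + i.1, by omega⟩

/-- The quadratic form `ϑ_a(u) = ϑ_0(u) + ⟨a,u⟩`. -/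
def th (m : ℕ) (a u : Fin (2*m) → ZMod 2) : ZMod 2 :=
  th0 m u + symp m a u

/-!
The symplectic transvections `T_v u = u + ⟨v,u⟩ v` satisfy `ϑ_c ∘ T_v = ϑ_{c'}` with
`c' = c + (ϑ_c(v) + 1) v`, because `s = ⟨v,u⟩` satisfies `s² = s`. Hence `T_{x+y}` carries `ϑ_x`
to `ϑ_y` whenever `ϑ_0(x) = ϑ_0(y)`, and `T_v` fixes `ϑ_c` whenever `ϑ_c(v) = 1`.
First `T_{a+a'}` moves `a` to `a'` and `b` to some `b₁ ≠ a'` with `ϑ_0(b₁) = ϑ_0(a')`. Then `b₁` is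
moved to `b'` while fixing `a'`: directly by `T_{b₁+b'}` if `ϑ_{a'}(b₁+b') = 1`, and otherwise via
an intermediate `c` with `ϑ_{a'}(b₁+c) = ϑ_{a'}(c+b') = 1`, which exists because `⟨·,·⟩` is
nondegenerate.
-/

section

variable {m : ℕ}

lemma zmod_two_mul_self (s : ZMod 2) : s * s = s := by
  rw [← sq, ZMod.pow_card]

lemma zmod_two_eq_zero_or_eq_one (s : ZMod 2) : s = 0 ∨ s = 1 := by
  revert s; decide

lemma symp_comm (u v : Fin (2*m) → ZMod 2) : symp m u v = symp m v u := by
  simp only [symp, mul_comm, add_comm]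

lemma symp_self (v : Fin (2*m) → ZMod 2) : symp m v v = 0 :=
  Finset.sum_eq_zero fun _ _ => by rw [mul_comm]; exact CharTwo.add_self_eq_zero _

lemma symp_add_left (u v w : Fin (2*m) → ZMod 2) :
    symp m (u + v) w = symp m u w + symp m v w := by
  simp only [symp, Pi.add_apply, ← Finset.sum_add_distrib]
  exact Finset.sum_congr rfl fun _ _ => by ring

lemma symp_add_right (u v w : Fin (2*m) → ZMod 2) :
    symp m u (v + w) = symp m u v + symp m u w := by
  rw [symp_comm, symp_add_left, symp_comm v, symp_comm w]

lemma symp_smul_left (s : ZMod 2) (u v : Fin (2*m) → ZMod 2) :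
    symp m (s • u) v = s * symp m u v := by
  simp only [symp, Pi.smul_apply, smul_eq_mul, Finset.mul_sum]
  exact Finset.sum_congr rfl fun _ _ => by ring

lemma symp_smul_right (s : ZMod 2) (u v : Fin (2*m) → ZMod 2) :
    symp m u (s • v) = s * symp m u v := by
  rw [symp_comm, symp_smul_left, symp_comm]

def sympForm (m : ℕ) : LinearMap.BilinForm (ZMod 2) (Fin (2*m) → ZMod 2) :=
  LinearMap.mk₂ (ZMod 2) (symp m) symp_add_left symp_smul_left symp_add_right symp_smul_right

lemma th0_add (u v : Fin (2*m) → ZMod 2) :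
    th0 m (u + v) = th0 m u + th0 m v + symp m u v := by
  simp only [th0, symp, Pi.add_apply, ← Finset.sum_add_distrib]
  exact Finset.sum_congr rfl fun _ _ => by ring

lemma th0_smul (s : ZMod 2) (v : Fin (2*m) → ZMod 2) : th0 m (s • v) = s * th0 m v := by
  simp only [th0, Pi.smul_apply, smul_eq_mul, Finset.mul_sum]
  exact Finset.sum_congr rfl fun _ _ => by rw [mul_mul_mul_comm, zmod_two_mul_self s]

lemma th_add (c u v : Fin (2*m) → ZMod 2) :
    th m c (u + v) = th m c u + th m c v + symp m u v := by
  rw [th, th, th, th0_add, symp_add_right]; ring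

lemma th_self_add (c x : Fin (2*m) → ZMod 2) : th m c (c + x) = th0 m c + th0 m x := by
  rw [th, th0_add, symp_add_right, symp_self]; grind

def transvection (v : Fin (2*m) → ZMod 2) :
    (Fin (2*m) → ZMod 2) ≃ₗ[ZMod 2] (Fin (2*m) → ZMod 2) :=
  LinearEquiv.transvection (f := sympForm m v) (symp_self v)

lemma transvection_apply (v u : Fin (2*m) → ZMod 2) :
    transvection v u = u + symp m v u • v := rfl

lemma symp_transvection (v u w : Fin (2*m) → ZMod 2) :
    symp m (transvection v u) (transvection v w) = symp m u w := by
  simp only [transvection_apply, symp_add_left, symp_add_right, symp_smul_left, symp_smul_right,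
    symp_self, symp_comm u v]
  grind

def act (v c : Fin (2*m) → ZMod 2) : Fin (2*m) → ZMod 2 :=
  c + (th m c v + 1) • v

lemma th_transvection (c v u : Fin (2*m) → ZMod 2) :
    th m c (transvection v u) = th m (act v c) u := by
  simp only [th, act, transvection_apply, th0_add, th0_smul, symp_add_left, symp_add_right,
    symp_smul_left, symp_smul_right, symp_comm u v, symp_comm c v]
  linear_combination zmod_two_mul_self (symp m v u)

lemma th0_act (v c : Fin (2*m) → ZMod 2) : th0 m (act v c) = th0 m c := by
  have hsq := zmod_two_mul_self (th m c v)
  rw [act, th0_add, th0_smul, symp_smul_right, th] at *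
  grind

lemma act_act (v c : Fin (2*m) → ZMod 2) : act v (act v c) = c := by
  have hth : th m (act v c) v = th m c v := by
    rw [act, th, th, symp_add_left, symp_smul_left, symp_self, mul_zero, add_zero]
  conv_lhs => rw [act, hth, act]
  rw [add_assoc, ZModModule.add_self, add_zero]

lemma act_injective (v : Fin (2*m) → ZMod 2) : Function.Injective (act v) :=
  Function.LeftInverse.injective (act_act v)

lemma act_of_th_eq_one {v c : Fin (2*m) → ZMod 2} (h : th m c v = 1) : act v c = c := by
  rw [act, h, CharTwo.add_self_eq_zero, zero_smul, add_zero]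

lemma act_add_self {x y : Fin (2*m) → ZMod 2} (h : th0 m x = th0 m y) : act (x + y) x = y := by
  rw [act, th_self_add, h, CharTwo.add_self_eq_zero, zero_add, one_smul, ← add_assoc,
    ZModModule.add_self, zero_add]

lemma symp_single_add (w : Fin (2*m) → ZMod 2) {j : ℕ} (hj : j < m) :
    symp m w (Pi.single ⟨m + j, by omega⟩ 1) = w ⟨j, by omega⟩ := by
  rw [symp, Finset.sum_eq_single ⟨j, hj⟩]
  · simp [show m ≠ 0 by omega]
  · intro i _ hi
    have hij : (i : ℕ) ≠ j := fun h => hi (Fin.ext h)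
    simp [Fin.ext_iff, hij, show (i : ℕ) ≠ m + j by omega]
  · simp

lemma symp_single (w : Fin (2*m) → ZMod 2) {j : ℕ} (hj : j < m) :
    symp m w (Pi.single ⟨j, by omega⟩ 1) = w ⟨m + j, by omega⟩ := by
  rw [symp, Finset.sum_eq_single ⟨j, hj⟩]
  · simp [show m ≠ 0 by omega]
  · intro i _ hi
    have hij : (i : ℕ) ≠ j := fun h => hi (Fin.ext h)
    simp [Fin.ext_iff, hij, show m + (i : ℕ) ≠ j by omega]
  · simp

lemma exists_symp_eq_one {w : Fin (2*m) → ZMod 2} (hw : w ≠ 0) : ∃ z, symp m w z = 1 := by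
  obtain ⟨j, hj⟩ := Function.ne_iff.mp hw
  have hj1 : w j = 1 := (zmod_two_eq_zero_or_eq_one (w j)).resolve_left hj
  rcases lt_or_ge j.1 m with hlt | hge
  · exact ⟨_, (symp_single_add w hlt).trans hj1⟩
  · obtain ⟨k, hk⟩ := Nat.exists_eq_add_of_le hge
    refine ⟨_, (symp_single w (j := k) (by omega)).trans ?_⟩
    simpa [← hk] using hj1

lemma exists_symp_eq_one_and_eq_one {w₁ w₂ : Fin (2*m) → ZMod 2} (h₁ : w₁ ≠ 0) (h₂ : w₂ ≠ 0) :
    ∃ z, symp m w₁ z = 1 ∧ symp m w₂ z = 1 := by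
  obtain ⟨p, hp⟩ := exists_symp_eq_one h₁
  obtain ⟨q, hq⟩ := exists_symp_eq_one h₂
  rcases zmod_two_eq_zero_or_eq_one (symp m w₂ p) with hp₂ | hp₂
  · rcases zmod_two_eq_zero_or_eq_one (symp m w₁ q) with hq₁ | hq₁
    · exact ⟨p + q, by simp [symp_add_right, hp, hq₁], by simp [symp_add_right, hp₂, hq]⟩
    · exact ⟨q, hq₁, hq⟩
  · exact ⟨p, hp, hp₂⟩

lemma exists_th_eq_zero_symp_eq_one (c : Fin (2*m) → ZMod 2) {w₁ w₂ : Fin (2*m) → ZMod 2}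
    (h₁ : w₁ ≠ 0) (h₂ : w₂ ≠ 0) (hc : th m c w₁ = 0) (h₁₂ : symp m w₁ w₂ = 0) :
    ∃ z, th m c z = 0 ∧ symp m w₁ z = 1 ∧ symp m w₂ z = 1 := by
  obtain ⟨z, hz₁, hz₂⟩ := exists_symp_eq_one_and_eq_one h₁ h₂
  rcases zmod_two_eq_zero_or_eq_one (th m c z) with hz | hz
  · exact ⟨z, hz, hz₁, hz₂⟩
  · refine ⟨z + w₁, ?_, ?_, ?_⟩
    · rw [th_add, hz, hc, symp_comm, hz₁]; decide
    · rw [symp_add_right, symp_self, hz₁, add_zero]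
    · rw [symp_add_right, hz₂, symp_comm, h₁₂, add_zero]

lemma exists_intermediate {a x y : Fin (2*m) → ZMod 2} (hx : x ≠ a) (hy : y ≠ a)
    (hx₀ : th0 m x = th0 m a) (hy₀ : th0 m y = th0 m a) (hxy : th m a (x + y) = 0) :
    ∃ c, th0 m c = th0 m a ∧ th m a (x + c) = 1 ∧ th m a (c + y) = 1 := by
  have hw₁ : th m a (a + x) = 0 := by rw [th_self_add, hx₀, CharTwo.add_self_eq_zero]
  have hw₂ : th m a (a + y) = 0 := by rw [th_self_add, hy₀, CharTwo.add_self_eq_zero]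
  have h₁₂ : symp m (a + x) (a + y) = 0 := by
    rwa [← ZModModule.add_add_add_cancel x a y, add_comm x, th_add, hw₁, hw₂, zero_add,
      zero_add] at hxy
  have hne {z : Fin (2*m) → ZMod 2} (hz : z ≠ a) : a + z ≠ 0 := by
    rwa [Ne, add_eq_zero_iff_eq_neg, ZModModule.neg_eq_self, eq_comm]
  obtain ⟨z, hz, hz₁, hz₂⟩ := exists_th_eq_zero_symp_eq_one a (hne hx) (hne hy) hw₁ h₁₂
  refine ⟨a + z, ?_, ?_, ?_⟩
  · rw [th0_add, add_assoc, ← th, hz, add_zero]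
  · rw [show x + (a + z) = (a + x) + z by abel, th_add, hw₁, hz, hz₁]; decide
  · rw [show a + z + y = (a + y) + z by abel, th_add, hw₂, hz, hz₂]; decide

def SpRelated (m : ℕ) (a b a' b' : Fin (2*m) → ZMod 2) : Prop :=
  ∃ A : (Fin (2*m) → ZMod 2) ≃ₗ[ZMod 2] (Fin (2*m) → ZMod 2),
    (∀ u v, symp m (A u) (A v) = symp m u v) ∧
    (∀ u, th m a (A u) = th m a' u) ∧
    (∀ u, th m b (A u) = th m b' u)

lemma SpRelated.trans {a b a' b' a'' b'' : Fin (2*m) → ZMod 2}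
    (h : SpRelated m a b a' b') (h' : SpRelated m a' b' a'' b'') : SpRelated m a b a'' b'' := by
  obtain ⟨A, hA, hAa, hAb⟩ := h
  obtain ⟨B, hB, hBa, hBb⟩ := h'
  exact ⟨B.trans A, fun u v => (hA _ _).trans (hB u v), fun u => (hAa _).trans (hBa u),
    fun u => (hAb _).trans (hBb u)⟩

lemma spRelated_act (v a b : Fin (2*m) → ZMod 2) : SpRelated m a b (act v a) (act v b) :=
  ⟨transvection v, symp_transvection v, th_transvection a v, th_transvection b v⟩

lemma spRelated_of_th_add_eq_one {a x y : Fin (2*m) → ZMod 2} (hxy : th0 m x = th0 m y)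
    (h : th m a (x + y) = 1) : SpRelated m a x a y := by
  simpa only [act_of_th_eq_one h, act_add_self hxy] using spRelated_act (x + y) a x

lemma spRelated_of_ne {a x y : Fin (2*m) → ZMod 2} (hx : x ≠ a) (hy : y ≠ a)
    (hx₀ : th0 m x = th0 m a) (hy₀ : th0 m y = th0 m a) : SpRelated m a x a y := by
  rcases zmod_two_eq_zero_or_eq_one (th m a (x + y)) with hxy | hxy
  · obtain ⟨c, hc₀, hxc, hcy⟩ := exists_intermediate hx hy hx₀ hy₀ hxy
    exact (spRelated_of_th_add_eq_one (hx₀.trans hc₀.symm) hxc).trans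
      (spRelated_of_th_add_eq_one (hc₀.trans hy₀.symm) hcy)
  · exact spRelated_of_th_add_eq_one (hx₀.trans hy₀.symm) hxy

end

theorem stmt_2_general (m : ℕ) (a b a' b' : Fin (2*m) → ZMod 2)
    (hab : a ≠ b) (hab' : a' ≠ b')
    (h1 : th0 m a = th0 m b) (h2 : th0 m b = th0 m a') (h3 : th0 m a' = th0 m b') :
    ∃ A : (Fin (2*m) → ZMod 2) ≃ₗ[ZMod 2] (Fin (2*m) → ZMod 2),
      (∀ u v, symp m (A u) (A v) = symp m u v) ∧
      (∀ u, th m a (A u) = th m a' u) ∧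
      (∀ u, th m b (A u) = th m b' u) := by
  have ha : act (a + a') a = a' := act_add_self (h1.trans h2)
  have hb : act (a + a') b ≠ a' := by
    simpa only [ha] using (act_injective (a + a')).ne hab.symm
  have step₁ : SpRelated m a b a' (act (a + a') b) := by
    simpa only [ha] using spRelated_act (a + a') a b
  exact step₁.trans (spRelated_of_ne hb hab'.symm (by rw [th0_act, h2]) h3.symm)

/-- `Sp(2m,2)` acts 2-transitively on each of its two orbits of quadratic forms:
if `a ≠ b`, `a' ≠ b'` and `ϑ_0(a) = ϑ_0(b) = ϑ_0(a') = ϑ_0(b')`, then some symplectic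
linear bijection carries the pair `(ϑ_a, ϑ_b)` to `(ϑ_{a'}, ϑ_{b'})`. -/
theorem stmt_2 (m : ℕ) (hm : 1 ≤ m) (a b a' b' : Fin (2*m) → ZMod 2)
    (hab : a ≠ b) (hab' : a' ≠ b')
    (h1 : th0 m a = th0 m b) (h2 : th0 m b = th0 m a') (h3 : th0 m a' = th0 m b') :
    ∃ A : (Fin (2*m) → ZMod 2) ≃ₗ[ZMod 2] (Fin (2*m) → ZMod 2),
      (∀ u v, symp m (A u) (A v) = symp m u v) ∧
      (∀ u, th m a (A u) = th m a' u) ∧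
      (∀ u, th m b (A u) = th m b' u) :=
  stmt_2_general m a b a' b' hab hab' h1 h2 h3
end

section
/- Let X be a finite set and let G₁ and G₂ be simple graphs on the vertex set X. Then the following are equivalent: (1) there exists a subset Y ⊆ X such that for all distinct a, b ∈ X, a and b are adjacent in G₂ if and only if exactly one of the following holds: a and b are adjacent in G₁, or exactly one of a, b lies in Y (i.e., G₂ is obtained from G₁ by Seidel switching with respect to Y); (2) for every three distinct vertices a, b, c ∈ X, the number of edges of G₁ among the pairs {a,b}, {a,c}, {b,c} is odd if and only if the number of edges of G₂ among these pairs is odd. (Two graphs are switching equivalent if and only if they have the same associated two-graph.) -/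
/-!
Switching with respect to `Y` flips the pair `{a, b}` exactly when `[a ∈ Y] + [b ∈ Y]` is odd, and
around a triangle each vertex is counted twice, so the parity of every triangle is preserved.
Conversely, fix a vertex `x` and switch with respect to the set `Y` of vertices whose adjacency to
`x` differs in the two graphs. This repairs every edge at `x`, and the edge `{a, b}` is then
forced by the parity of the triangle `x a b`.
-/

theorem odd_ite_add_ite_add_ite_iff (p q r : Prop) [Decidable p] [Decidable q] [Decidable r] :
    Odd ((if p then 1 else 0) + (if q then 1 else 0) + (if r then 1 else 0) : ℕ)
      ↔ Xor p (Xor q r) := by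
  by_cases hp : p <;> by_cases hq : q <;> by_cases hr : r <;>
    simp [hp, hq, hr, Nat.odd_iff]

namespace SimpleGraph

variable {X : Type*}

/-- `G` has an odd number of edges among `a`, `b`, `c`. -/
def TriangleParity (G : SimpleGraph X) (a b c : X) : Prop :=
  Xor (G.Adj a b) (Xor (G.Adj a c) (G.Adj b c))

def IsSeidelSwitch (G H : SimpleGraph X) (Y : Set X) : Prop :=
  ∀ a b : X, a ≠ b → (H.Adj a b ↔ Xor (G.Adj a b) (Xor (a ∈ Y) (b ∈ Y)))

theorem IsSeidelSwitch.triangleParity_iff {G H : SimpleGraph X} {Y : Set X}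
    (h : G.IsSeidelSwitch H Y) {a b c : X} (hab : a ≠ b) (hac : a ≠ c) (hbc : b ≠ c) :
    G.TriangleParity a b c ↔ H.TriangleParity a b c := by
  simp only [TriangleParity, h a b hab, h a c hac, h b c hbc]
  grind

theorem isSeidelSwitch_of_triangleParity_iff {G H : SimpleGraph X}
    (h : ∀ a b c : X, a ≠ b → a ≠ c → b ≠ c → (G.TriangleParity a b c ↔ H.TriangleParity a b c))
    (x : X) : G.IsSeidelSwitch H {a | ¬(G.Adj x a ↔ H.Adj x a)} := by
  intro a b hab
  by_cases ha : a = x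
  · subst ha
    grind [SimpleGraph.irrefl]
  by_cases hb : b = x
  · subst hb
    grind [SimpleGraph.irrefl, SimpleGraph.adj_comm]
  have := h x a b (Ne.symm ha) (Ne.symm hb) hab
  unfold TriangleParity at this
  grind

theorem exists_isSeidelSwitch_iff_triangleParity_iff (G H : SimpleGraph X) :
    (∃ Y, G.IsSeidelSwitch H Y) ↔
      ∀ a b c : X, a ≠ b → a ≠ c → b ≠ c → (G.TriangleParity a b c ↔ H.TriangleParity a b c) := by
  refine ⟨fun ⟨_, hY⟩ _ _ _ => hY.triangleParity_iff, fun h => ?_⟩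
  cases isEmpty_or_nonempty X with
  | inl _ => exact ⟨∅, fun a => isEmptyElim a⟩
  | inr hX => exact ⟨_, isSeidelSwitch_of_triangleParity_iff h hX.some⟩

end SimpleGraph

open scoped Classical in
theorem stmt_8_general (X : Type*) (G₁ G₂ : SimpleGraph X) :
    (∃ Y : Set X, ∀ a b : X, a ≠ b →
        (G₂.Adj a b ↔ Xor' (G₁.Adj a b) (Xor' (a ∈ Y) (b ∈ Y))))
    ↔ (∀ a b c : X, a ≠ b → a ≠ c → b ≠ c →
        (Odd ((if G₁.Adj a b then 1 else 0) + (if G₁.Adj a c then 1 else 0)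
            + (if G₁.Adj b c then 1 else 0) : ℕ)
          ↔ Odd ((if G₂.Adj a b then 1 else 0) + (if G₂.Adj a c then 1 else 0)
            + (if G₂.Adj b c then 1 else 0) : ℕ))) := by
  simp only [odd_ite_add_ite_add_ite_iff]
  exact G₁.exists_isSeidelSwitch_iff_triangleParity_iff G₂

open scoped Classical in
/-- Two graphs on a finite vertex set `X` are Seidel-switching equivalent iff they have the
same associated two-graph: (1) `G₂` is obtained from `G₁` by switching w.r.t. some `Y ⊆ X`
iff (2) every triple of distinct vertices spans an odd number of edges in `G₁` exactly when
it does in `G₂`. -/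
theorem stmt_8 (X : Type*) [Fintype X] (G₁ G₂ : SimpleGraph X) :
    (∃ Y : Set X, ∀ a b : X, a ≠ b →
        (G₂.Adj a b ↔ Xor' (G₁.Adj a b) (Xor' (a ∈ Y) (b ∈ Y))))
    ↔ (∀ a b c : X, a ≠ b → a ≠ c → b ≠ c →
        (Odd ((if G₁.Adj a b then 1 else 0) + (if G₁.Adj a c then 1 else 0)
            + (if G₁.Adj b c then 1 else 0) : ℕ)
          ↔ Odd ((if G₂.Adj a b then 1 else 0) + (if G₂.Adj a c then 1 else 0)
            + (if G₂.Adj b c then 1 else 0) : ℕ))) :=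
  stmt_8_general X G₁ G₂
end
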